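/- There is an isomorphism of abelian groups ℤ/8 ≅ W(ℤ/4) sending 1 to the class of [1]; in particular the symmetric Witt group of ℤ/4 is cyclic of order 8, generated by the class of the unit form [1]. -/

import Mathlib

noncomputable section

/-- The subgroup of squares of units of a commutative ring. -/
def squareUnits (R : Type) [CommRing R] : Subgroup Rˣ :=
  (powMonoidHom 2 : Rˣ →* Rˣ).range

/-- The group of square classes `Rˣ/(Rˣ)²`. -/
def SqCl (R : Type) [CommRing R] : Type := Rˣ ⧸ squareUnits R

instance (R : Type) [CommRing R] : CommGroup (SqCl R) :=
  QuotientGroup.Quotient.commGroup (squareUnits R)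

/-- The square class `[a]` of a unit `a`. -/
def cls {R : Type} [CommRing R] (a : Rˣ) : SqCl R := QuotientGroup.mk a

/-- The group ring `ℤ[Rˣ/(Rˣ)²]`. -/
abbrev GRing (R : Type) [CommRing R] := MonoidAlgebra ℤ (SqCl R)

/-- The generator `[a]` of the group ring, for a unit `a`. -/
def gen {R : Type} [CommRing R] (a : Rˣ) : GRing R :=
  MonoidAlgebra.of ℤ (SqCl R) (cls a)

/-- The set of relations defining the Grothendieck–Witt ring of a (connected semi-)local ring:
`([a₁]+[a₂]+[a₃]+[a₄]) − ([b₁]+[b₂]+[b₃]+[b₄])` whenever there exists `P ∈ GL₄(R)` with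
`P ⬝ diag(a₁,…,a₄) ⬝ Pᵀ = diag(b₁,…,b₄)`. -/
def gwRel (R : Type) [CommRing R] : Set (GRing R) :=
  {x | ∃ (a b : Fin 4 → Rˣ) (P : Matrix (Fin 4) (Fin 4) R),
    IsUnit P.det ∧
    P * Matrix.diagonal (fun i => (a i : R)) * P.transpose =
      Matrix.diagonal (fun i => (b i : R)) ∧
    x = (∑ i, gen (a i)) - (∑ i, gen (b i))}

/-- The (symmetric) Grothendieck–Witt ring of `R`, presented à la Knebusch–Rosenberg–Ware. -/
abbrev GW (R : Type) [CommRing R] := GRing R ⧸ Ideal.span (gwRel R)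

/-- The class `[a] ∈ GW(R)` of a unit `a`. -/
def gw {R : Type} [CommRing R] (a : Rˣ) : GW R :=
  Ideal.Quotient.mk (Ideal.span (gwRel R)) (gen a)

/-- The (symmetric) Witt ring of `R` : the quotient of `GW(R)` by the ideal generated by the
hyperbolic element `[1] + [-1]`. -/
abbrev Wr (R : Type) [CommRing R] := GW R ⧸ Ideal.span {gw (R := R) 1 + gw (-1)}

/-- The class in the Witt ring of a unit `a`. -/
def wcl {R : Type} [CommRing R] (a : Rˣ) : Wr R :=
  Ideal.Quotient.mk (Ideal.span {gw (R := R) 1 + gw (-1)}) (gw a)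

/-!
Units of `ℤ/4` are `±1` and `[-1] = -[1]` in the Witt ring, so `[1]` generates it; the relation
`4⟨1⟩ ≅ 4⟨-1⟩`, realised by a quaternion multiplication matrix, makes it `8`-torsion.
Conversely, the Gauss sum `∑ₓ i^{q(x)}` of a quadratic form `q` over `ℤ/4` is a congruence
invariant. For a diagonal form `⟨u₁, …, uₙ⟩` it equals `(2(1 + i))ⁿ (-i)ᵐ`, where `m` counts the
entries `uⱼ = -1`, so it determines `m mod 4` and hence the signature `n - 2m mod 8`. The signature
mod `8` therefore descends to `W(ℤ/4) → ℤ/8` and inverts `k ↦ k • [1]`.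
-/

open Finset Matrix

lemma AddChar.map_sum_eq_prod {ι A M : Type*} [AddCommMonoid A] [CommMonoid M] (ψ : AddChar A M)
    (s : Finset ι) (f : ι → A) : ψ (∑ i ∈ s, f i) = ∏ i ∈ s, ψ (f i) := by
  have h := map_prod ψ.toMonoidHom (fun i => Multiplicative.ofAdd (f i)) s
  rwa [← ofAdd_sum] at h

section QuadGaussSum

variable {n R S : Type*} [Fintype n] [DecidableEq n] [CommRing R] [Fintype R] [CommRing S]

def quadGaussSum (ψ : AddChar R S) (M : Matrix n n R) : S :=
  ∑ x : n → R, ψ (x ⬝ᵥ M *ᵥ x)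

lemma quadGaussSum_congr (ψ : AddChar R S) (M : Matrix n n R) {P : Matrix n n R}
    (hP : IsUnit P.det) : quadGaussSum ψ (P * M * Pᵀ) = quadGaussSum ψ M := by
  have hP' : IsUnit P := (isUnit_iff_isUnit_det P).mpr hP
  have hbij : Function.Bijective (fun x : n → R => x ᵥ* P) :=
    ⟨vecMul_injective_of_isUnit hP', vecMul_surjective_iff_isUnit.mpr hP'⟩
  have hform : ∀ x : n → R, x ⬝ᵥ (P * M * Pᵀ) *ᵥ x = (x ᵥ* P) ⬝ᵥ M *ᵥ (x ᵥ* P) := fun x => by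
    rw [dotProduct_mulVec, dotProduct_mulVec, vecMul_vecMul, ← vecMul_vecMul, vecMul_transpose,
      dotProduct_comm, dotProduct_mulVec, dotProduct_comm]
  simp only [quadGaussSum, hform]
  exact hbij.sum_comp fun y => ψ (y ⬝ᵥ M *ᵥ y)

lemma quadGaussSum_diagonal (ψ : AddChar R S) (d : n → R) :
    quadGaussSum ψ (diagonal d) = ∏ i, ∑ t, ψ (d i * t * t) := by
  rw [prod_univ_sum, Fintype.piFinset_univ, quadGaussSum]
  refine sum_congr rfl fun x _ => ?_
  simp only [mulVec_diagonal, dotProduct, ← AddChar.map_sum_eq_prod]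
  congr 1
  exact sum_congr rfl fun i _ => by ring

end QuadGaussSum

section WittRing

variable {R : Type} [CommRing R]

def SqCl.liftIntUnits (χ : Rˣ →* ℤˣ) : SqCl R →* ℤˣ :=
  QuotientGroup.lift (squareUnits R) χ (by
    rintro _ ⟨u, rfl⟩
    simp [Int.units_sq])

def GRing.signature (χ : Rˣ →* ℤˣ) : GRing R →+* ℤ :=
  (MonoidAlgebra.lift ℤ ℤ (SqCl R) ((Units.coeHom ℤ).comp (SqCl.liftIntUnits χ))).toRingHom

lemma GRing.signature_gen (χ : Rˣ →* ℤˣ) (u : Rˣ) : GRing.signature χ (gen u) = χ u :=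
  MonoidAlgebra.lift_of _ (cls u)

def Wr.mk (R : Type) [CommRing R] : GRing R →+* Wr R :=
  (Ideal.Quotient.mk _).comp (Ideal.Quotient.mk _)

lemma Wr.mk_gen (u : Rˣ) : Wr.mk R (gen u) = wcl u := rfl

lemma Wr.mk_surjective : Function.Surjective (Wr.mk R) :=
  Ideal.Quotient.mk_surjective.comp Ideal.Quotient.mk_surjective

def Wr.lift {S : Type*} [Ring S] (f : GRing R →+* S) (hrel : ∀ x ∈ gwRel R, f x = 0)
    (hhyp : f (gen 1) + f (gen (-1)) = 0) : Wr R →+* S :=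
  Ideal.Quotient.lift _
    (Ideal.Quotient.lift _ f fun _ hx =>
      RingHom.mem_ker.mp ((Ideal.span_le (I := RingHom.ker f)).mpr hrel hx))
    fun _ hx => RingHom.mem_ker.mp ((Ideal.span_le (I := RingHom.ker _)).mpr
      (Set.singleton_subset_iff.mpr (RingHom.mem_ker.mpr (by rw [map_add]; exact hhyp))) hx)

lemma Wr.lift_wcl {S : Type*} [Ring S] (f : GRing R →+* S) (hrel : ∀ x ∈ gwRel R, f x = 0)
    (hhyp : f (gen 1) + f (gen (-1)) = 0) (u : Rˣ) : Wr.lift f hrel hhyp (wcl u) = f (gen u) :=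
  rfl

lemma cls_mul (u v : Rˣ) : cls (u * v) = cls u * cls v := rfl

lemma gen_mul (u v : Rˣ) : gen (u * v) = gen u * gen v := by
  rw [gen, cls_mul, map_mul]; rfl

lemma wcl_mul (u v : Rˣ) : wcl (u * v) = wcl u * wcl v := by
  rw [← Wr.mk_gen, gen_mul, map_mul]; rfl

lemma wcl_neg (u : Rˣ) : wcl (-u) = -wcl u := by
  have hhyp : wcl (1 : Rˣ) + wcl (-1) = 0 :=
    Ideal.Quotient.eq_zero_iff_mem.mpr (Ideal.subset_span rfl)
  have h : wcl u * (wcl 1 + wcl (-1)) = 0 := hhyp ▸ mul_zero (wcl u)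
  rw [mul_add, ← wcl_mul, ← wcl_mul, mul_one, mul_neg_one] at h
  exact eq_neg_of_add_eq_zero_right h

lemma closure_range_wcl : AddSubgroup.closure (Set.range (wcl (R := R))) = ⊤ := by
  rw [eq_top_iff]
  rintro x -
  obtain ⟨y, rfl⟩ := Wr.mk_surjective x
  induction y using MonoidAlgebra.induction_on with
  | of g =>
    obtain ⟨u, rfl⟩ := QuotientGroup.mk_surjective g
    exact AddSubgroup.subset_closure ⟨u, rfl⟩
  | add f g hf hg => rw [map_add]; exact add_mem hf hg
  | smul k f hf => rw [map_zsmul]; exact zsmul_mem hf k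

lemma sum_wcl_eq_of_congr {a b : Fin 4 → Rˣ} {P : Matrix (Fin 4) (Fin 4) R} (hP : IsUnit P.det)
    (hab : P * diagonal (fun i => (a i : R)) * Pᵀ = diagonal (fun i => (b i : R))) :
    ∑ i, wcl (a i) = ∑ i, wcl (b i) := by
  have hrel : (∑ i, gen (a i)) - ∑ i, gen (b i) ∈ gwRel R := ⟨a, b, P, hP, hab, rfl⟩
  rw [← sub_eq_zero]
  simp only [← Wr.mk_gen, ← map_sum, ← map_sub, Wr.mk, RingHom.comp_apply,
    Ideal.Quotient.eq_zero_iff_mem.mpr (Ideal.subset_span hrel), map_zero]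

end WittRing

section ZModFour

open ZMod Zsqrtd

lemma ZMod.units_four_eq_one_or (u : (ZMod 4)ˣ) : u = 1 ∨ u = -1 := by
  revert u; decide

def gaussChar : AddChar (ZMod 4) GaussianInt :=
  AddChar.zmodChar 4 (ζ := sqrtd) (by decide)

lemma sum_gaussChar_mul_sq (u : (ZMod 4)ˣ) :
    ∑ t, gaussChar (u * t * t) = 2 * (1 + sqrtd) * (-sqrtd) ^ (if u = -1 then 1 else 0) := by
  rcases ZMod.units_four_eq_one_or u with rfl | rfl <;> decide

lemma χ₄_units (u : (ZMod 4)ˣ) : χ₄ u = 1 - 2 * (if u = -1 then 1 else 0) := by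
  rcases ZMod.units_four_eq_one_or u with rfl | rfl <;> decide

variable {ι : Type*} [Fintype ι]

def negCount (a : ι → (ZMod 4)ˣ) : ℕ := #{j | a j = -1}

lemma prod_sum_gaussChar (a : ι → (ZMod 4)ˣ) :
    ∏ j, ∑ t, gaussChar (a j * t * t) =
      (2 * (1 + sqrtd)) ^ Fintype.card ι * (-sqrtd) ^ negCount a := by
  simp only [sum_gaussChar_mul_sq, prod_mul_distrib, prod_const, card_univ, prod_pow_eq_pow_sum,
    negCount, card_filter, mul_pow]

lemma sum_χ₄_units (a : ι → (ZMod 4)ˣ) :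
    ∑ j, χ₄ (a j) = Fintype.card ι - 2 * (negCount a : ℤ) := by
  simp only [χ₄_units, sum_sub_distrib, ← mul_sum, sum_boole, sum_const, card_univ, nsmul_eq_mul,
    mul_one, negCount]

lemma orderOf_neg_sqrtd : orderOf (-sqrtd : GaussianInt) = 4 :=
  orderOf_eq_prime_pow (p := 2) (n := 1) (by decide) (by decide)

lemma sum_χ₄_eq_of_prod_sum_gaussChar_eq {a b : ι → (ZMod 4)ˣ}
    (h : ∏ j, ∑ t, gaussChar (a j * t * t) = ∏ j, ∑ t, gaussChar (b j * t * t)) :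
    ((∑ j, χ₄ (a j) : ℤ) : ZMod 8) = ((∑ j, χ₄ (b j) : ℤ) : ZMod 8) := by
  rw [prod_sum_gaussChar, prod_sum_gaussChar] at h
  have hpow := mul_left_cancel₀ (pow_ne_zero _ (by decide)) h
  have hfin : IsOfFinOrder (-sqrtd : GaussianInt) :=
    orderOf_pos_iff.mp (by rw [orderOf_neg_sqrtd]; norm_num)
  rw [hfin.pow_eq_pow_iff_modEq, orderOf_neg_sqrtd] at hpow
  have h8 : ((2 * negCount a : ℕ) : ZMod 8) = ((2 * negCount b : ℕ) : ZMod 8) :=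
    (ZMod.natCast_eq_natCast_iff _ _ 8).mpr (hpow.mul_left' 2)
  push_cast at h8
  rw [sum_χ₄_units, sum_χ₄_units]
  push_cast
  rw [h8]

def signatureModEight : GRing (ZMod 4) →+* ZMod 8 :=
  (Int.castRingHom (ZMod 8)).comp (GRing.signature χ₄.toUnitHom)

lemma signatureModEight_gen (u : (ZMod 4)ˣ) : signatureModEight (gen u) = χ₄ u := by
  simp [signatureModEight, GRing.signature_gen]

lemma signatureModEight_gwRel : ∀ x ∈ gwRel (ZMod 4), signatureModEight x = 0 := by
  rintro _ ⟨a, b, P, hP, hab, rfl⟩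
  have hgauss : ∏ j, ∑ t, gaussChar (a j * t * t) = ∏ j, ∑ t, gaussChar (b j * t * t) := by
    rw [← quadGaussSum_diagonal, ← quadGaussSum_diagonal, ← hab, quadGaussSum_congr _ _ hP]
  rw [map_sub, sub_eq_zero, map_sum, map_sum]
  simpa only [signatureModEight_gen, Int.cast_sum] using sum_χ₄_eq_of_prod_sum_gaussChar_eq hgauss

def wittSignature : Wr (ZMod 4) →+* ZMod 8 :=
  Wr.lift signatureModEight signatureModEight_gwRel (by
    rw [signatureModEight_gen, signatureModEight_gen]; decide)

lemma wittSignature_wcl_one : wittSignature (wcl 1) = 1 := by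
  rw [wittSignature, Wr.lift_wcl, signatureModEight_gen]; decide

lemma zmultiples_wcl_one : AddSubgroup.zmultiples (wcl (1 : (ZMod 4)ˣ)) = ⊤ := by
  rw [eq_top_iff, ← closure_range_wcl, AddSubgroup.closure_le]
  rintro _ ⟨u, rfl⟩
  rcases ZMod.units_four_eq_one_or u with rfl | rfl
  · exact AddSubgroup.mem_zmultiples _
  · rw [wcl_neg]; exact neg_mem (AddSubgroup.mem_zmultiples _)

-- left multiplication by the quaternion `1 + i + j`, whose norm is `3 = -1` in `ℤ/4`
def quaternionMatrix : Matrix (Fin 4) (Fin 4) (ZMod 4) :=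
  !![1, -1, -1, 0; 1, 1, 0, 1; 1, 0, 1, -1; 0, -1, 1, 1]

lemma quaternionMatrix_mul_transpose : quaternionMatrix * quaternionMatrixᵀ = -1 := by
  decide

lemma eight_zsmul_wcl_one : (8 : ℤ) • wcl (1 : (ZMod 4)ˣ) = 0 := by
  have hdet : IsUnit quaternionMatrix.det := isUnit_det_of_right_inverse (B := -quaternionMatrixᵀ)
    (by rw [mul_neg, quaternionMatrix_mul_transpose, neg_neg])
  have h := sum_wcl_eq_of_congr (a := fun _ => 1) (b := fun _ => -1) hdet (by
    simpa [Matrix.diagonal_one, ← Matrix.diagonal_neg] using quaternionMatrix_mul_transpose)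
  simp only [sum_const, card_univ, Fintype.card_fin, wcl_neg, smul_neg] at h
  rw [show (8 : ℤ) = ((4 + 4 : ℕ) : ℤ) from rfl, natCast_zsmul, add_nsmul]
  exact add_eq_zero_iff_eq_neg.mpr h

end ZModFour

/-- The symmetric Witt group `W(ℤ/4)` is cyclic of order `8`, generated by the
class of the unit form `[1]`: there is an isomorphism `ℤ/8 ≅ W(ℤ/4)` sending `1` to `[1]`. -/
theorem witt_zmod_four :
    ∃ e : ZMod 8 ≃+ Wr (ZMod 4),
      e 1 = wcl 1 := by
  let f : ZMod 8 →+ Wr (ZMod 4) := ZMod.lift 8 ⟨zmultiplesHom _ (wcl 1), eight_zsmul_wcl_one⟩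
  have hf : ∀ k : ℤ, f k = k • wcl 1 := ZMod.lift_coe _ _
  have hinj : Function.Injective f := by
    refine Function.LeftInverse.injective (g := wittSignature) fun k => ?_
    obtain ⟨m, rfl⟩ := ZMod.intCast_surjective k
    rw [hf, map_zsmul, wittSignature_wcl_one, zsmul_one]
  have hsurj : Function.Surjective f := fun x => by
    obtain ⟨m, rfl⟩ :=
      AddSubgroup.mem_zmultiples_iff.mp (zmultiples_wcl_one ▸ AddSubgroup.mem_top x)
    exact ⟨m, hf m⟩
  have hf1 : f 1 = wcl 1 := by simpa only [Int.cast_one, one_zsmul] using hf 1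
  exact ⟨AddEquiv.ofBijective f ⟨hinj, hsurj⟩, hf1⟩

end
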